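/- arXiv:1904.01117 — 2 statements merged into one kernel-verified Lean document; each statement's English description precedes it below -/
import Mathlib

section
/- Assume the loop is universally almost surely terminating (P_s(τ < ∞) = 1 for every s). Then for all expectations f and I, the following are equivalent: (i) the pointwise limit lim_{n→∞} Φ_fⁿ(I) exists and equals lfp Φ_f (I is uniformly integrable for f); (ii) for every initial state s, lim_{n→∞} ∫_Ω X_n^{f,I} dP_s exists and equals ∫_Ω X_τ^f dP_s (the induced stochastic process is uniformly integrable, i.e., expectation and almost-sure limit commute). -/
open MeasureTheory hiding uniformIntegrable_iff
open Filter Topology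
open scoped Classical ENNReal ENat NNReal

/-! Loop model: states `S`, guard `φ : Set S`, loop-body transition probabilities
`μ : S → S → ℝ≥0`. Expectations are functions `S → ℝ≥0∞` with the pointwise order. -/

variable {S : Type*}

/-- One-step weakest preexpectation of the loop body:
`wpF μ X s = ∑_{s'} μ s s' * X s'`. -/
noncomputable def wpF (μ : S → S → ℝ≥0) (X : S → ℝ≥0∞) (s : S) : ℝ≥0∞ :=
  ∑' s', (μ s s' : ℝ≥0∞) * X s'

/-- The characteristic function `Φ_f` of the loop `while φ do C` with respect to the
postexpectation `f`. -/
noncomputable def Phi (φ : Set S) (μ : S → S → ℝ≥0) (f : S → ℝ≥0∞)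
    (X : S → ℝ≥0∞) (s : S) : ℝ≥0∞ :=
  if s ∈ φ then wpF μ X s else f s

theorem Phi_mono (φ : Set S) (μ : S → S → ℝ≥0) (f : S → ℝ≥0∞) :
    Monotone (Phi φ μ f) := by
  intro X Y h s
  unfold Phi wpF
  split_ifs with hs
  · exact ENNReal.tsum_le_tsum fun s' => by gcongr; exact h s'
  · exact le_rfl

/-- Least fixed point of the characteristic function `Φ_f`,
i.e. the weakest preexpectation `wp(while φ do C)(f)`. -/
noncomputable def lfpPhi (φ : Set S) (μ : S → S → ℝ≥0) (f : S → ℝ≥0∞) : S → ℝ≥0∞ :=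
  OrderHom.lfp ⟨Phi φ μ f, Phi_mono φ μ f⟩

/-- A finite expectation: `X s < ∞` for all states. -/
def FinExp (X : S → ℝ≥0∞) : Prop := ∀ s, X s < ⊤

/-- A bounded expectation: `X s ≤ c` for some constant `c : ℝ≥0`. -/
def BddExp (X : S → ℝ≥0∞) : Prop := ∃ c : ℝ≥0, ∀ s, X s ≤ (c : ℝ≥0∞)

/-- `I` harmonizes with `f` if `I` agrees with `f` on all terminal states (states
outside the guard). -/
def Harmonizes (φ : Set S) (I f : S → ℝ≥0∞) : Prop := ∀ s ∉ φ, I s = f s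

/-- `ΔI`: the expected change of `I` within one loop iteration. -/
noncomputable def dExp (φ : Set S) (μ : S → S → ℝ≥0) (I : S → ℝ≥0∞) (s : S) : ℝ≥0∞ :=
  if s ∈ φ then ∑' s', (μ s s' : ℝ≥0∞) * ((I s' - I s) ⊔ (I s - I s')) else 0

/-- `I` is conditionally difference bounded if `ΔI` is bounded by a constant. -/
def CondDiffBdd (φ : Set S) (μ : S → S → ℝ≥0) (I : S → ℝ≥0∞) : Prop :=
  ∃ c : ℝ≥0, ∀ s, dExp φ μ I s ≤ (c : ℝ≥0∞)

/-! The loop space `Ω := ℕ → S` with its product σ-algebra (`S` discrete). -/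

/-- The cylinder set of a finite sequence of states. -/
def Cyl (π : List S) : Set (ℕ → S) := {ϑ | ∀ i : Fin π.length, ϑ i = π.get i}

/-- The σ-algebra `F_n`, generated by the cylinder sets of sequences of length `n+1`. -/
def Fn (n : ℕ) : MeasurableSpace (ℕ → S) :=
  MeasurableSpace.generateFrom {A | ∃ π : List S, π.length = n + 1 ∧ A = Cyl π}

/-- The shifted filtration `G_n := F_{n+1}`. -/
def Gn (n : ℕ) : MeasurableSpace (ℕ → S) := Fn (n + 1)

/-- One-step transition probability of the loop: from a state `a` inside the guard move
according to `μ`; a state outside the guard is absorbing. -/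
noncomputable def stepP (φ : Set S) (μ : S → S → ℝ≥0) (a b : S) : ℝ≥0 :=
  if a ∈ φ then μ a b else if b = a then 1 else 0

/-- Product of the one-step transition probabilities along a finite sequence. -/
noncomputable def chainP (φ : Set S) (μ : S → S → ℝ≥0) : List S → ℝ≥0
  | [] => 1
  | [_] => 1
  | a :: b :: rest => stepP φ μ a b * chainP φ μ (b :: rest)

/-- The prefix probability `p_s(π)` of the finite sequence `π` of states, starting the
loop in the state `s`. -/
noncomputable def prefP (φ : Set S) (μ : S → S → ℝ≥0) (s : S) (π : List S) : ℝ≥0 :=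
  (if π.head? = some s then 1 else 0) * chainP φ μ π

/-- The looping time `τ`: the first time the run leaves the guard. -/
noncomputable def loopT (φ : Set S) (ϑ : ℕ → S) : ℕ∞ :=
  sInf {n : ℕ∞ | ∃ m : ℕ, n = (m : ℕ∞) ∧ ϑ m ∉ φ}

/-- The stochastic process `X_n^{f,I}` induced by the invariant `I` (w.r.t. the
postexpectation `f`). -/
noncomputable def Xn (φ : Set S) (f I : S → ℝ≥0∞) (n : ℕ) (ϑ : ℕ → S) : ℝ≥0∞ :=
  if loopT φ ϑ ≤ (n : ℕ∞) then f (ϑ (loopT φ ϑ).toNat) else I (ϑ (n + 1))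

/-- The stopped process `X_τ^f`. -/
noncomputable def Xstop (φ : Set S) (f : S → ℝ≥0∞) (ϑ : ℕ → S) : ℝ≥0∞ :=
  if loopT φ ϑ < ⊤ then f (ϑ (loopT φ ϑ).toNat) else 0

/-!
Splitting `E_s[X_n^{f,I}]` over the first `n + 2` states of the run and conditioning on the first
step turns it into `Φ_f^{n+1}(I)(s)`; only the cylinder probabilities of `P_s` enter. For `I = 0`
the process `X_n^{f,0}` increases to `X_τ^f`, so by monotone convergence `E_s[X_τ^f]` is
`sup_n Φ_fⁿ(0)(s)`, which is `lfp Φ_f (s)` by Kleene's theorem (`wp` commutes with suprema of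
chains). The two sequences in the statement thus agree up to an index shift, and so do their limits.
-/

section LoopingTime

variable {φ : Set S} {ϑ : ℕ → S}

lemma loopT_eq_zero (h : ϑ 0 ∉ φ) : loopT φ ϑ = 0 :=
  nonpos_iff_eq_zero.mp (sInf_le ⟨0, rfl, h⟩)

lemma loopT_eq_loopT_shift_add_one (h : ϑ 0 ∈ φ) :
    loopT φ ϑ = loopT φ (fun k => ϑ (k + 1)) + 1 := by
  have exits_eq : {n : ℕ∞ | ∃ m : ℕ, n = m ∧ ϑ m ∉ φ}
      = (· + 1) '' {n : ℕ∞ | ∃ m : ℕ, n = m ∧ ϑ (m + 1) ∉ φ} := by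
    ext n
    constructor
    · rintro ⟨_ | m, rfl, hm⟩
      · exact absurd h hm
      · exact ⟨m, ⟨m, rfl, hm⟩, by push_cast; rfl⟩
    · rintro ⟨_, ⟨m, rfl, hm⟩, rfl⟩
      exact ⟨m + 1, by push_cast; rfl, hm⟩
  rw [loopT, loopT, exits_eq, sInf_image, ENat.sInf_add]

end LoopingTime

section InducedProcess

variable {φ : Set S} {f I : S → ℝ≥0∞} {n : ℕ} {ϑ : ℕ → S}

lemma Xn_of_notMem (h : ϑ 0 ∉ φ) : Xn φ f I n ϑ = f (ϑ 0) := by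
  simp [Xn, loopT_eq_zero h]

lemma Xn_zero_of_mem (h : ϑ 0 ∈ φ) : Xn φ f I 0 ϑ = I (ϑ 1) := by
  simp [Xn, loopT_eq_loopT_shift_add_one h]

lemma Xn_succ_of_mem (h : ϑ 0 ∈ φ) :
    Xn φ f I (n + 1) ϑ = Xn φ f I n (fun k => ϑ (k + 1)) := by
  unfold Xn
  rw [loopT_eq_loopT_shift_add_one h]
  induction loopT φ (fun k => ϑ (k + 1)) using ENat.recTopCoe with
  | top => simp
  | coe k => simp only [← Nat.cast_add_one, Nat.cast_le, ENat.toNat_natCast, add_le_add_iff_right]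

variable (φ f ϑ)

lemma monotone_Xn_bot : Monotone fun n => Xn φ f ⊥ n ϑ := by
  intro m n hmn
  dsimp only [Xn]
  split_ifs with hm hn
  · exact le_rfl
  · exact absurd (hm.trans (by exact_mod_cast hmn)) hn
  · exact bot_le
  · exact bot_le

lemma Xstop_eq_iSup_Xn_bot : Xstop φ f ϑ = ⨆ n, Xn φ f ⊥ n ϑ := by
  unfold Xstop Xn
  induction loopT φ ϑ using ENat.recTopCoe with
  | top => simp
  | coe k =>
    simp only [ENat.natCast_lt_top, if_true, ENat.toNat_natCast, Nat.cast_le]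
    refine le_antisymm (le_iSup_of_le k (by simp)) (iSup_le fun n => ?_)
    split_ifs <;> simp

end InducedProcess

section PathValue

variable (φ : Set S) (f I : S → ℝ≥0∞)

/-- The path-wise counterpart of `(Phi φ μ f)^[n] I`. -/
noncomputable def pathVal : (n : ℕ) → (Fin (n + 1) → S) → ℝ≥0∞
  | 0, v => I (v 0)
  | n + 1, v => if v 0 ∈ φ then pathVal n (Fin.tail v) else f (v 0)

variable {φ f I}

lemma Xn_eq_pathVal (n : ℕ) (ϑ : ℕ → S) :
    Xn φ f I n ϑ = pathVal φ f I (n + 1) (fun i => ϑ i) := by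
  induction n generalizing ϑ with
  | zero =>
    by_cases h : ϑ 0 ∈ φ
    · simp [pathVal, h, Xn_zero_of_mem h, Fin.tail]
    · simp [pathVal, h, Xn_of_notMem h]
  | succ n ih =>
    by_cases h : ϑ 0 ∈ φ
    · rw [Xn_succ_of_mem h, ih, pathVal.eq_2 (n := n + 1), Fin.val_zero, if_pos h]
      rfl
    · simp [pathVal, h, Xn_of_notMem h]

end PathValue

lemma ENNReal.tsum_pi_fin_succ {k : ℕ} (F : (Fin (k + 1) → S) → ℝ≥0∞) :
    ∑' v, F v = ∑' a, ∑' w : Fin k → S, F (Fin.cons a w) := by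
  rw [← ENNReal.tsum_prod' (f := fun p : S × (Fin k → S) => F (Fin.cons p.1 p.2))]
  exact ((Fin.consEquiv fun _ => S).tsum_eq F).symm

section PathSums

variable (φ : Set S) (μ : S → S → ℝ≥0)

lemma chainP_cons_ofFn (a : S) {k : ℕ} (w : Fin (k + 1) → S) :
    chainP φ μ (a :: List.ofFn w) = stepP φ μ a (w 0) * chainP φ μ (List.ofFn w) := by
  rw [List.ofFn_succ]
  rfl

lemma tsum_prefP_mul (s : S) {k : ℕ} (g : (Fin (k + 1) → S) → ℝ≥0∞) :
    ∑' v, (prefP φ μ s (List.ofFn v) : ℝ≥0∞) * g v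
      = ∑' w : Fin k → S, (chainP φ μ (s :: List.ofFn w) : ℝ≥0∞) * g (Fin.cons s w) := by
  rw [ENNReal.tsum_pi_fin_succ, tsum_eq_single s]
  · simp [prefP]
  · intro a ha
    simp [prefP, ha]

lemma tsum_chainP_of_notMem {s : S} (hs : s ∉ φ) (k : ℕ) :
    ∑' w : Fin k → S, (chainP φ μ (s :: List.ofFn w) : ℝ≥0∞) = 1 := by
  induction k with
  | zero => simp [chainP]
  | succ k ih =>
    rw [ENNReal.tsum_pi_fin_succ, tsum_eq_single s]
    · simpa [chainP, stepP, hs] using ih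
    · intro a ha
      simp [chainP, stepP, hs, ha]

lemma tsum_prefP_mul_pathVal (f I : S → ℝ≥0∞) (n : ℕ) (s : S) :
    ∑' v, (prefP φ μ s (List.ofFn v) : ℝ≥0∞) * pathVal φ f I n v = (Phi φ μ f)^[n] I s := by
  induction n generalizing s with
  | zero =>
    rw [tsum_prefP_mul]
    simp [chainP, pathVal]
  | succ n ih =>
    rw [tsum_prefP_mul, Function.iterate_succ_apply', Phi]
    by_cases hs : s ∈ φ
    · rw [if_pos hs]
      calc ∑' w, (chainP φ μ (s :: List.ofFn w) : ℝ≥0∞) * pathVal φ f I (n + 1) (Fin.cons s w)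
          = ∑' w : Fin (n + 1) → S,
              (μ s (w 0) : ℝ≥0∞) * (chainP φ μ (List.ofFn w) * pathVal φ f I n w) := by
            refine tsum_congr fun w => ?_
            rw [pathVal, Fin.cons_zero, if_pos hs, Fin.tail_cons, chainP_cons_ofFn, stepP,
              if_pos hs, ENNReal.coe_mul, mul_assoc]
        _ = ∑' a, (μ s a : ℝ≥0∞) *
              ∑' v, (prefP φ μ a (List.ofFn v) : ℝ≥0∞) * pathVal φ f I n v := by
            rw [ENNReal.tsum_pi_fin_succ]
            simp only [tsum_prefP_mul, ← ENNReal.tsum_mul_left, Fin.cons_zero, List.ofFn_cons]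
        _ = wpF μ ((Phi φ μ f)^[n] I) s := by simp only [ih, wpF]
    · simp only [pathVal, Fin.cons_zero, if_neg hs, ENNReal.tsum_mul_right,
        tsum_chainP_of_notMem φ μ hs, one_mul]

end PathSums

lemma ENNReal.tsum_iSup_of_monotone {ι : Type*} {X : ℕ → ι → ℝ≥0∞} (hX : Monotone X) :
    ∑' i, ⨆ n, X n i = ⨆ n, ∑' i, X n i := by
  simp_rw [ENNReal.tsum_eq_iSup_sum]
  rw [iSup_comm]
  exact iSup_congr fun t => ENNReal.finsetSum_iSup_of_monotone fun i _ _ h => hX h i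

section Kleene

open OmegaCompletePartialOrder

variable (φ : Set S) (μ : S → S → ℝ≥0) (f : S → ℝ≥0∞)

lemma Phi_ωScottContinuous : ωScottContinuous (Phi φ μ f) := by
  have ωSup_eq (c : Chain (S → ℝ≥0∞)) : ωSup c = ⨆ n, c n :=
    (isLUB_range_ωSup c).unique isLUB_iSup
  refine ωScottContinuous.of_monotone_map_ωSup ⟨Phi_mono φ μ f, fun c => funext fun s => ?_⟩
  rw [ωSup_eq, ωSup_eq]
  simp only [iSup_apply, Chain.coe_map, OrderHom.coe_mk, Function.comp_apply]
  unfold Phi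
  split_ifs
  · simp only [wpF, iSup_apply, ENNReal.mul_iSup]
    exact ENNReal.tsum_iSup_of_monotone fun m n h s' => by gcongr; exact c.monotone h s'
  · exact iSup_const.symm

lemma lfpPhi_eq_iSup_iterate : lfpPhi φ μ f = ⨆ n, (Phi φ μ f)^[n] ⊥ :=
  fixedPoints.lfp_eq_sSup_iterate _ (Phi_ωScottContinuous φ μ f)

end Kleene

lemma cyl_ofFn {k : ℕ} (v : Fin (k + 1) → S) :
    Cyl (List.ofFn v) = (fun ϑ : ℕ → S => fun i : Fin (k + 1) => ϑ i) ⁻¹' {v} := by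
  ext ϑ
  simp only [Cyl, Set.mem_ofPred_eq, Set.mem_preimage, Set.mem_singleton_iff, funext_iff,
    List.get_ofFn]
  exact ⟨fun h i => h (Fin.cast (by simp) i), fun h i => h (Fin.cast (by simp) i)⟩

section Expectations

variable [Countable S] [MeasurableSpace S] [DiscreteMeasurableSpace S]

lemma measurable_comp_prefix {k : ℕ} (g : (Fin k → S) → ℝ≥0∞) :
    Measurable fun ϑ : ℕ → S => g fun i => ϑ i :=
  (measurable_of_countable g).comp (by fun_prop)

lemma lintegral_comp_prefix {ν : Measure (ℕ → S)} {w : List S → ℝ≥0∞}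
    (hν : ∀ π : List S, π ≠ [] → ν (Cyl π) = w π) {k : ℕ} (g : (Fin (k + 1) → S) → ℝ≥0∞) :
    ∫⁻ ϑ, g (fun i => ϑ i) ∂ν = ∑' v, w (List.ofFn v) * g v := by
  have hprefix : Measurable fun (ϑ : ℕ → S) (i : Fin (k + 1)) => ϑ i := by fun_prop
  rw [← lintegral_map (measurable_of_countable g) hprefix, lintegral_countable']
  refine tsum_congr fun v => ?_
  rw [Measure.map_apply hprefix (measurableSet_singleton v), ← cyl_ofFn, hν _ (by simp), mul_comm]

variable {ν : Measure (ℕ → S)} {φ : Set S} {μ : S → S → ℝ≥0} {s : S}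

lemma lintegral_Xn (hν : ∀ π : List S, π ≠ [] → ν (Cyl π) = prefP φ μ s π)
    (f I : S → ℝ≥0∞) (n : ℕ) :
    ∫⁻ ϑ, Xn φ f I n ϑ ∂ν = (Phi φ μ f)^[n + 1] I s := by
  simp only [Xn_eq_pathVal, lintegral_comp_prefix hν, tsum_prefP_mul_pathVal]

lemma lintegral_Xstop (hν : ∀ π : List S, π ≠ [] → ν (Cyl π) = prefP φ μ s π)
    (f : S → ℝ≥0∞) :
    ∫⁻ ϑ, Xstop φ f ϑ ∂ν = lfpPhi φ μ f s := by
  have hmono : Monotone fun n => (Phi φ μ f)^[n] ⊥ s :=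
    fun m n h => (Phi_mono φ μ f).monotone_iterate_of_le_map bot_le h s
  have hmeas (n : ℕ) : Measurable (Xn φ f ⊥ n) := by
    rw [show Xn φ f ⊥ n = _ from funext (Xn_eq_pathVal n)]
    exact measurable_comp_prefix _
  calc ∫⁻ ϑ, Xstop φ f ϑ ∂ν
      = ⨆ n, ∫⁻ ϑ, Xn φ f ⊥ n ϑ ∂ν := by
        simp only [Xstop_eq_iSup_Xn_bot]
        exact lintegral_iSup hmeas fun m n h ϑ => monotone_Xn_bot φ f ϑ h
    _ = ⨆ n, (Phi φ μ f)^[n + 1] ⊥ s := by simp only [lintegral_Xn hν]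
    _ = lfpPhi φ μ f s := by
        rw [lfpPhi_eq_iSup_iterate, iSup_apply]
        exact hmono.iSup_nat_add 1

end Expectations

theorem uniformIntegrable_iff_general {S : Type*} [Countable S] [MeasurableSpace S] [DiscreteMeasurableSpace S]
    (φ : Set S) (μ : S → S → ℝ≥0)
    (P : S → Measure (ℕ → S))
    (hPC : ∀ (s : S) (π : List S), π ≠ [] → P s (Cyl π) = (prefP φ μ s π : ℝ≥0∞))
    (f I : S → ℝ≥0∞) :
    (∀ s : S, Tendsto (fun n => (Phi φ μ f)^[n] I s) atTop (nhds (lfpPhi φ μ f s)))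
      ↔
    (∀ s : S, Tendsto (fun n => ∫⁻ ϑ, Xn φ f I n ϑ ∂(P s)) atTop
        (nhds (∫⁻ ϑ, Xstop φ f ϑ ∂(P s)))) := by
  refine forall_congr' fun s => ?_
  simp only [lintegral_Xn (hPC s), lintegral_Xstop (hPC s)]
  exact (tendsto_add_atTop_iff_nat 1).symm

/-- **Uniform integrability of expectations vs. of the induced process.** If the loop is
universally almost surely terminating, then `Φ_fⁿ(I)` converges pointwise to `lfp Φ_f`
iff for every initial state `s` the expected values `E_s[X_n^{f,I}]` converge to
`E_s[X_τ^f]`. -/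
theorem uniformIntegrable_iff {S : Type*} [Countable S] [MeasurableSpace S] [DiscreteMeasurableSpace S]
    (φ : Set S) (μ : S → S → ℝ≥0) (hμ : ∀ s, ∑' s', μ s s' = 1)
    (P : S → Measure (ℕ → S)) (hP : ∀ s, IsProbabilityMeasure (P s))
    (hPC : ∀ (s : S) (π : List S), π ≠ [] → P s (Cyl π) = (prefP φ μ s π : ℝ≥0∞))
    (hAST : ∀ s, P s {ϑ | loopT φ ϑ < ⊤} = 1) (f I : S → ℝ≥0∞) :
    (∀ s : S, Tendsto (fun n => (Phi φ μ f)^[n] I s) atTop (nhds (lfpPhi φ μ f s)))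
      ↔
    (∀ s : S, Tendsto (fun n => ∫⁻ ϑ, Xn φ f I n ϑ ∂(P s)) atTop
        (nhds (∫⁻ ϑ, Xstop φ f ϑ ∂(P s)))) :=
  uniformIntegrable_iff_general φ μ P hPC f I
end

section
/- Let f and I be expectations with I ⪯ Φ_f(I) (I is a subinvariant) and Φ_fⁿ(I)(s) < ∞ for all n ∈ ℕ and s ∈ Σ. Then for every initial state s, the induced process (X_n^{f,I})_{n ∈ ℕ} is a submartingale with respect to (G_n)_{n ∈ ℕ} under P_s: each X_n^{f,I} is G_n-measurable with ∫_Ω X_n^{f,I} dP_s < ∞, and for every n ∈ ℕ and every G ∈ G_n, ∫_G X_n^{f,I} dP_s ≤ ∫_G X_{n+1}^{f,I} dP_s. -/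
open MeasureTheory Filter Topology
open scoped Classical ENNReal ENat NNReal

/-! Loop model: states `S`, guard `φ : Set S`, loop-body transition probabilities
`μ : S → S → ℝ≥0`. Expectations are functions `S → ℝ≥0∞` with the pointwise order. -/

variable {S : Type*}

/-! The cylinders of length `m + 1` are the atoms of `F_m`. On such an atom the Markov property
of `P_s` lets one loop iteration be absorbed into the invariant:
`∫_{Cyl} X_m^{f,J} = ∫_{Cyl} X_{m-1}^{f,Φ_f J}`. Iterating over the atoms gives
`∫ X_n^{f,I} dP_s = Φ_fⁿ⁺¹(I)(s) < ∞`, and for `G ∈ G_n`,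
`∫_G X_n^{f,I} ≤ ∫_G X_n^{f,Φ_f I} = ∫_G X_{n+1}^{f,I}` by `I ⪯ Φ_f(I)`.
Measurability holds because `X_n^{f,I}` only depends on the first `n + 2` states. -/

section Cylinders

lemma mem_Cyl_ofFn {m : ℕ} (v : Fin m → S) (ϑ : ℕ → S) :
    ϑ ∈ Cyl (List.ofFn v) ↔ ∀ i : Fin m, ϑ i = v i := by
  simp only [Cyl, Set.mem_ofPred_eq, List.get_ofFn]
  exact ⟨fun h i => h (Fin.cast List.length_ofFn.symm i),
    fun h i => h (Fin.cast List.length_ofFn i)⟩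

lemma Cyl_ofFn_snoc {m : ℕ} (v : Fin m → S) (b : S) :
    Cyl (List.ofFn (Fin.snoc v b)) = Cyl (List.ofFn v) ∩ {ϑ | ϑ m = b} := by
  ext ϑ
  simp only [Set.mem_inter_iff, mem_Cyl_ofFn, Fin.forall_fin_succ', Fin.snoc_castSucc,
    Fin.snoc_last, Fin.val_castSucc, Fin.val_last, Set.mem_ofPred_eq]

lemma Cyl_subset_or_disjoint_of_measurableSet_Fn {m : ℕ} {G : Set (ℕ → S)}
    (hG : MeasurableSet[Fn m] G) (v : Fin (m + 1) → S) :
    Cyl (List.ofFn v) ⊆ G ∨ Disjoint (Cyl (List.ofFn v)) G := by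
  induction G, hG using MeasurableSpace.generateFrom_induction with
  | hC A hA =>
    obtain ⟨π, hπ, rfl⟩ := hA
    refine (em (Disjoint (Cyl (List.ofFn v)) (Cyl π))).symm.imp_left fun hmeet ϑ' hϑ' i => ?_
    obtain ⟨ϑ, hϑv, hϑπ⟩ := Set.not_disjoint_iff.1 hmeet
    have hi : (i : ℕ) < m + 1 := hπ ▸ i.2
    rw [(mem_Cyl_ofFn v ϑ').1 hϑ' ⟨i, hi⟩, ← (mem_Cyl_ofFn v ϑ).1 hϑv ⟨i, hi⟩]
    exact hϑπ i
  | empty => exact .inr (Set.disjoint_empty _)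
  | compl A _ ih =>
    exact ih.symm.imp Set.subset_compl_iff_disjoint_right.2 Set.disjoint_compl_right_iff_subset.2
  | iUnion A _ ih =>
    by_cases h : ∃ k, Cyl (List.ofFn v) ⊆ A k
    · obtain ⟨k, hk⟩ := h
      exact .inl (hk.trans (Set.subset_iUnion A k))
    · rw [not_exists] at h
      exact .inr (Set.disjoint_iUnion_right.2 fun k => (ih k).resolve_left (h k))

lemma measurable_Fn_of_dependsOn [Countable S] {β : Type*} [MeasurableSpace β] {m : ℕ}
    {F : (ℕ → S) → β} (hF : DependsOn F (Set.Iic m)) : Measurable[Fn m] F := by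
  intro B _
  have hB : F ⁻¹' B =
      ⋃ (v : Fin (m + 1) → S) (_ : Cyl (List.ofFn v) ⊆ F ⁻¹' B), Cyl (List.ofFn v) := by
    refine subset_antisymm (fun ϑ hϑ => ?_) (Set.iUnion₂_subset fun v hv => hv)
    refine Set.mem_iUnion₂.2 ⟨fun i => ϑ i, fun ϑ' hϑ' => ?_, (mem_Cyl_ofFn _ _).2 fun _ => rfl⟩
    rw [Set.mem_preimage, ← hF fun i hi => ?_]
    · exact hϑ
    · exact ((mem_Cyl_ofFn _ ϑ').1 hϑ' ⟨i, Nat.lt_succ_of_le hi⟩).symm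
  rw [hB]
  exact .iUnion fun v => .iUnion fun _ =>
    MeasurableSpace.measurableSet_generateFrom ⟨_, List.length_ofFn, rfl⟩

variable [MeasurableSpace S] [DiscreteMeasurableSpace S]

lemma measurableSet_Cyl (π : List S) : MeasurableSet (Cyl π) := by
  have hCyl : Cyl π = ⋂ i : Fin π.length, (fun ϑ : ℕ → S => ϑ i) ⁻¹' {π.get i} := by
    ext ϑ
    simp [Cyl]
  rw [hCyl]
  exact .iInter fun i => measurable_pi_apply _ (measurableSet_singleton _)

lemma lintegral_eq_tsum_setLIntegral_Cyl [Countable S] (m : ℕ) (F : (ℕ → S) → ℝ≥0∞)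
    (Q : Measure (ℕ → S)) :
    ∫⁻ ϑ, F ϑ ∂Q = ∑' v : Fin m → S, ∫⁻ ϑ in Cyl (List.ofFn v), F ϑ ∂Q := by
  have hcover : ⋃ v : Fin m → S, Cyl (List.ofFn v) = Set.univ :=
    Set.eq_univ_of_forall fun ϑ =>
      Set.mem_iUnion.2 ⟨fun i => ϑ i, (mem_Cyl_ofFn _ _).2 fun _ => rfl⟩
  have hdisj : Pairwise (Function.onFun Disjoint fun v : Fin m → S => Cyl (List.ofFn v)) :=
    fun v w hvw => Set.disjoint_left.2 fun ϑ hv hw => hvw <| funext fun i => by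
      rw [← (mem_Cyl_ofFn v ϑ).1 hv i, (mem_Cyl_ofFn w ϑ).1 hw i]
  rw [← lintegral_iUnion (fun _ => measurableSet_Cyl _) hdisj, hcover, Measure.restrict_univ]

lemma setLIntegral_comp_eval [Countable S] (A : Set (ℕ → S)) (k : ℕ) (g : S → ℝ≥0∞)
    (Q : Measure (ℕ → S)) :
    ∫⁻ ϑ in A, g (ϑ k) ∂Q = ∑' b, g b * Q (A ∩ {ϑ | ϑ k = b}) := by
  rw [← lintegral_map .of_discrete (measurable_pi_apply k), lintegral_countable']
  refine tsum_congr fun b => ?_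
  rw [Measure.map_apply (measurable_pi_apply k) (measurableSet_singleton b),
    Measure.restrict_apply (measurable_pi_apply k (measurableSet_singleton b)), Set.inter_comm]
  rfl

lemma setLIntegral_le_of_forall_Cyl [Countable S] {m : ℕ} {G : Set (ℕ → S)}
    (hG : MeasurableSet[Fn m] G) {F H : (ℕ → S) → ℝ≥0∞} {Q : Measure (ℕ → S)}
    (hFH : ∀ v : Fin (m + 1) → S,
      ∫⁻ ϑ in Cyl (List.ofFn v), F ϑ ∂Q ≤ ∫⁻ ϑ in Cyl (List.ofFn v), H ϑ ∂Q) :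
    ∫⁻ ϑ in G, F ϑ ∂Q ≤ ∫⁻ ϑ in G, H ϑ ∂Q := by
  simp only [lintegral_eq_tsum_setLIntegral_Cyl (m + 1) _ (Q.restrict G),
    Measure.restrict_restrict (measurableSet_Cyl _)]
  refine ENNReal.tsum_le_tsum fun v => ?_
  rcases Cyl_subset_or_disjoint_of_measurableSet_Fn hG v with h | h
  · rw [Set.inter_eq_left.2 h]
    exact hFH v
  · rw [h.inter_eq, Measure.restrict_empty, lintegral_zero_measure, lintegral_zero_measure]

end Cylinders

section PrefixProbability

variable {φ : Set S} {μ : S → S → ℝ≥0}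

lemma chainP_append_singleton :
    ∀ (π : List S) (hπ : π ≠ []) (b : S),
      chainP φ μ (π ++ [b]) = chainP φ μ π * stepP φ μ (π.getLast hπ) b
  | [a], _, b => by simp [chainP]
  | a :: c :: rest, _, b => by
    simp only [List.cons_append, chainP, List.getLast_cons_cons]
    rw [← List.cons_append, chainP_append_singleton (c :: rest) (List.cons_ne_nil c rest),
      mul_assoc]

lemma prefP_ofFn_snoc (s : S) {m : ℕ} (v : Fin (m + 1) → S) (b : S) :
    prefP φ μ s (List.ofFn (Fin.snoc v b)) =
      prefP φ μ s (List.ofFn v) * stepP φ μ (v (Fin.last m)) b := by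
  have hsnoc : List.ofFn (Fin.snoc v b) = List.ofFn v ++ [b] := by
    rw [List.ofFn_succ_last]
    simp only [Fin.snoc_castSucc, Fin.snoc_last]
  have hne : List.ofFn v ≠ [] := by simp
  rw [hsnoc, prefP, prefP, List.head?_append_of_ne_nil _ hne,
    chainP_append_singleton _ hne, List.getLast_ofFn, mul_assoc]
  rfl

end PrefixProbability

section LoopingTime

variable {φ : Set S} {ϑ ϑ' : ℕ → S}

lemma loopT_lt_coe_iff {m : ℕ} : loopT φ ϑ < m ↔ ∃ k < m, ϑ k ∉ φ := by
  simp only [loopT, sInf_lt_iff, Set.mem_ofPred_eq]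
  constructor
  · rintro ⟨_, ⟨k, rfl, hk⟩, hkm⟩
    exact ⟨k, by exact_mod_cast hkm, hk⟩
  · rintro ⟨k, hkm, hk⟩
    exact ⟨k, ⟨k, rfl, hk⟩, by exact_mod_cast hkm⟩

lemma loopT_eq_coe_iff {k : ℕ} : loopT φ ϑ = k ↔ ϑ k ∉ φ ∧ ∀ j < k, ϑ j ∈ φ := by
  have hsplit : loopT φ ϑ = k ↔ loopT φ ϑ < (k + 1 : ℕ) ∧ ¬ loopT φ ϑ < k := by
    rw [not_lt, Nat.cast_succ, ENat.lt_add_one_iff (ENat.natCast_ne_top k), le_antisymm_iff]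
  simp only [hsplit, loopT_lt_coe_iff, not_exists, not_and, not_not]
  constructor
  · rintro ⟨⟨j, hj, hjφ⟩, h⟩
    obtain rfl : j = k := le_antisymm (Nat.lt_succ_iff.1 hj) (not_lt.1 fun hjk => hjφ (h j hjk))
    exact ⟨hjφ, h⟩
  · rintro ⟨hk, h⟩
    exact ⟨⟨k, k.lt_succ_self, hk⟩, h⟩

lemma loopT_eq_coe_of_eqOn {k : ℕ} (hk : loopT φ ϑ = k) (h : ∀ i ≤ k, ϑ i = ϑ' i) :
    loopT φ ϑ' = k := by
  rw [loopT_eq_coe_iff] at hk ⊢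
  exact ⟨h k le_rfl ▸ hk.1, fun j hj => h j hj.le ▸ hk.2 j hj⟩

/-- `X_{m-1}^{f,K}` in the paper's notation, which also makes sense at `m = 0`. -/
noncomputable def Xshift (φ : Set S) (f K : S → ℝ≥0∞) (m : ℕ) (ϑ : ℕ → S) : ℝ≥0∞ :=
  if loopT φ ϑ < m then f (ϑ (loopT φ ϑ).toNat) else K (ϑ m)

variable {f J K : S → ℝ≥0∞} {m : ℕ}

lemma Xn_eq_Xshift (n : ℕ) : Xn φ f K n = Xshift φ f K (n + 1) := by
  ext ϑ
  simp only [Xn, Xshift, Nat.cast_succ, ENat.lt_add_one_iff (ENat.natCast_ne_top n)]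

lemma Xshift_zero : Xshift φ f K 0 ϑ = K (ϑ 0) := by
  simp [Xshift]

lemma Xshift_mono (hJK : J ≤ K) : Xshift φ f J m ≤ Xshift φ f K m := fun ϑ => by
  unfold Xshift
  split_ifs
  exacts [le_rfl, hJK _]

lemma dependsOn_Xshift : DependsOn (Xshift φ f K m) (Set.Iic m) := by
  intro ϑ ϑ' h
  have hlt : loopT φ ϑ < m ↔ loopT φ ϑ' < m := by
    simp only [loopT_lt_coe_iff]
    exact exists_congr fun k => and_congr_right fun hk => by rw [h k (Set.mem_Iic.2 hk.le)]
  unfold Xshift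
  by_cases hτ : loopT φ ϑ < m
  · obtain ⟨k, hk⟩ := ENat.ne_top_iff_exists.1 (hτ.trans (ENat.natCast_lt_top m)).ne
    have hkm : k ≤ m := by exact_mod_cast (hk ▸ hτ).le
    have hk' := loopT_eq_coe_of_eqOn hk.symm fun i hi => h i (Set.mem_Iic.2 (hi.trans hkm))
    rw [if_pos hτ, if_pos (hlt.1 hτ), ← hk, hk', ENat.toNat_natCast, h k (Set.mem_Iic.2 hkm)]
  · rw [if_neg hτ, if_neg (hlt.not.1 hτ), h m (Set.mem_Iic.2 le_rfl)]

variable {μ : S → S → ℝ≥0}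

lemma Xshift_succ_of_exists_not_mem (h : ∃ k ≤ m, ϑ k ∉ φ) :
    Xshift φ f J (m + 1) ϑ = Xshift φ f (Phi φ μ f J) m ϑ := by
  have hτ : loopT φ ϑ < (m + 1 : ℕ) :=
    loopT_lt_coe_iff.2 (h.imp fun k hk => ⟨Nat.lt_succ_of_le hk.1, hk.2⟩)
  unfold Xshift
  rw [if_pos hτ]
  by_cases hτm : loopT φ ϑ < m
  · rw [if_pos hτm]
  · have hm : loopT φ ϑ = m := le_antisymm
      (by rwa [Nat.cast_succ, ENat.lt_add_one_iff (ENat.natCast_ne_top m)] at hτ) (not_lt.1 hτm)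
    rw [if_neg hτm, hm, ENat.toNat_natCast, Phi, if_neg (loopT_eq_coe_iff.1 hm).1]

lemma Xshift_succ_of_forall_mem (h : ∀ k ≤ m, ϑ k ∈ φ) :
    Xshift φ f J (m + 1) ϑ = J (ϑ (m + 1)) := by
  have hτ : ¬ loopT φ ϑ < (m + 1 : ℕ) := fun hlt => by
    obtain ⟨k, hk, hkφ⟩ := loopT_lt_coe_iff.1 hlt
    exact hkφ (h k (Nat.lt_succ_iff.1 hk))
  rw [Xshift, if_neg hτ]

lemma Xshift_Phi_of_forall_mem (h : ∀ k ≤ m, ϑ k ∈ φ) :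
    Xshift φ f (Phi φ μ f J) m ϑ = wpF μ J (ϑ m) := by
  have hτ : ¬ loopT φ ϑ < m := fun hlt => by
    obtain ⟨k, hk, hkφ⟩ := loopT_lt_coe_iff.1 hlt
    exact hkφ (h k hk.le)
  rw [Xshift, if_neg hτ, Phi, if_pos (h m le_rfl)]

end LoopingTime

section LoopMeasure

variable [Countable S] [MeasurableSpace S] [DiscreteMeasurableSpace S]
  {φ : Set S} {μ : S → S → ℝ≥0} {Q : Measure (ℕ → S)} {s : S}
  (hQ : ∀ π : List S, π ≠ [] → Q (Cyl π) = prefP φ μ s π)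
include hQ

lemma lintegral_comp_eval_zero (g : S → ℝ≥0∞) : ∫⁻ ϑ, g (ϑ 0) ∂Q = g s := by
  have hCyl : ∀ b : S, {ϑ : ℕ → S | ϑ 0 = b} = Cyl [b] := fun b => by
    ext ϑ
    simp [Cyl]
  rw [← setLIntegral_univ, setLIntegral_comp_eval]
  simp only [Set.univ_inter, hCyl, hQ _ (List.cons_ne_nil _ _), prefP, chainP]
  simp [apply_ite (fun x : ℝ≥0 => (x : ℝ≥0∞))]

lemma setLIntegral_Cyl_comp_eval_succ {m : ℕ} (v : Fin (m + 1) → S) (g : S → ℝ≥0∞) :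
    ∫⁻ ϑ in Cyl (List.ofFn v), g (ϑ (m + 1)) ∂Q =
      Q (Cyl (List.ofFn v)) * ∑' b, stepP φ μ (v (Fin.last m)) b * g b := by
  rw [setLIntegral_comp_eval, ← ENNReal.tsum_mul_left]
  refine tsum_congr fun b => ?_
  rw [← Cyl_ofFn_snoc, hQ _ (by simp), hQ _ (by simp), prefP_ofFn_snoc, ENNReal.coe_mul]
  ring

lemma setLIntegral_Cyl_Xshift_succ (f J : S → ℝ≥0∞) {m : ℕ} (v : Fin (m + 1) → S) :
    ∫⁻ ϑ in Cyl (List.ofFn v), Xshift φ f J (m + 1) ϑ ∂Q =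
      ∫⁻ ϑ in Cyl (List.ofFn v), Xshift φ f (Phi φ μ f J) m ϑ ∂Q := by
  by_cases hv : ∀ k, v k ∈ φ
  · have hmem : ∀ ϑ ∈ Cyl (List.ofFn v), ∀ k ≤ m, ϑ k ∈ φ := fun ϑ hϑ k hk => by
      rw [(mem_Cyl_ofFn v ϑ).1 hϑ ⟨k, Nat.lt_succ_of_le hk⟩]
      exact hv _
    calc ∫⁻ ϑ in Cyl (List.ofFn v), Xshift φ f J (m + 1) ϑ ∂Q
        = ∫⁻ ϑ in Cyl (List.ofFn v), J (ϑ (m + 1)) ∂Q :=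
          setLIntegral_congr_fun (measurableSet_Cyl _) fun ϑ hϑ =>
            Xshift_succ_of_forall_mem (hmem ϑ hϑ)
      _ = ∫⁻ _ in Cyl (List.ofFn v), wpF μ J (v (Fin.last m)) ∂Q := by
          rw [setLIntegral_Cyl_comp_eval_succ hQ, setLIntegral_const, mul_comm]
          simp only [stepP, if_pos (hv _), wpF]
      _ = ∫⁻ ϑ in Cyl (List.ofFn v), Xshift φ f (Phi φ μ f J) m ϑ ∂Q :=
          setLIntegral_congr_fun (measurableSet_Cyl _) fun ϑ hϑ => by
            rw [Xshift_Phi_of_forall_mem (hmem ϑ hϑ)]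
            exact congrArg (wpF μ J) ((mem_Cyl_ofFn v ϑ).1 hϑ (Fin.last m)).symm
  · obtain ⟨k, hk⟩ := not_forall.1 hv
    refine setLIntegral_congr_fun (measurableSet_Cyl _) fun ϑ hϑ =>
      Xshift_succ_of_exists_not_mem ⟨k, Nat.lt_succ_iff.1 k.2, ?_⟩
    rwa [(mem_Cyl_ofFn v ϑ).1 hϑ k]

lemma lintegral_Xshift (f J : S → ℝ≥0∞) (m : ℕ) :
    ∫⁻ ϑ, Xshift φ f J m ϑ ∂Q = (Phi φ μ f)^[m] J s := by
  induction m generalizing J with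
  | zero =>
    simp only [Xshift_zero]
    exact lintegral_comp_eval_zero hQ J
  | succ m ih =>
    rw [lintegral_eq_tsum_setLIntegral_Cyl (m + 1),
      tsum_congr (setLIntegral_Cyl_Xshift_succ hQ f J), ← lintegral_eq_tsum_setLIntegral_Cyl, ih,
      Function.iterate_succ_apply]

end LoopMeasure

theorem subinvariant_submartingale_general {S : Type*} [Countable S] [MeasurableSpace S] [DiscreteMeasurableSpace S]
    (φ : Set S) (μ : S → S → ℝ≥0)
    (P : S → Measure (ℕ → S))
    (hPC : ∀ (s : S) (π : List S), π ≠ [] → P s (Cyl π) = (prefP φ μ s π : ℝ≥0∞))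
    (f I : S → ℝ≥0∞) (hsub : I ≤ Phi φ μ f I)
    (hfin : ∀ n : ℕ, FinExp ((Phi φ μ f)^[n] I)) (s : S) (n : ℕ) :
    Measurable[Gn n] (Xn φ f I n) ∧
    (∫⁻ ϑ, Xn φ f I n ϑ ∂(P s)) < ⊤ ∧
    ∀ G : Set (ℕ → S), MeasurableSet[Gn n] G →
      ∫⁻ ϑ in G, Xn φ f I n ϑ ∂(P s) ≤ ∫⁻ ϑ in G, Xn φ f I (n + 1) ϑ ∂(P s) := by
  simp only [Xn_eq_Xshift]
  refine ⟨measurable_Fn_of_dependsOn dependsOn_Xshift, ?_, fun G hG => ?_⟩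
  · rw [lintegral_Xshift (hPC s)]
    exact hfin _ s
  · calc ∫⁻ ϑ in G, Xshift φ f I (n + 1) ϑ ∂P s
        ≤ ∫⁻ ϑ in G, Xshift φ f (Phi φ μ f I) (n + 1) ϑ ∂P s :=
          lintegral_mono (Xshift_mono hsub)
      _ ≤ ∫⁻ ϑ in G, Xshift φ f I (n + 1 + 1) ϑ ∂P s :=
          setLIntegral_le_of_forall_Cyl hG fun v =>
            (setLIntegral_Cyl_Xshift_succ (hPC s) f I v).ge

/-- **A subinvariant induces a submartingale.** If `I ⪯ Φ_f(I)` and all iterates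
`Φ_fⁿ(I)` are finite, then for every initial state `s` the process `(X_n^{f,I})_n` is a
submartingale w.r.t. `(G_n)_n` under `P_s`. -/
theorem subinvariant_submartingale {S : Type*} [Countable S] [MeasurableSpace S] [DiscreteMeasurableSpace S]
    (φ : Set S) (μ : S → S → ℝ≥0) (hμ : ∀ s, ∑' s', μ s s' = 1)
    (P : S → Measure (ℕ → S)) (hP : ∀ s, IsProbabilityMeasure (P s))
    (hPC : ∀ (s : S) (π : List S), π ≠ [] → P s (Cyl π) = (prefP φ μ s π : ℝ≥0∞))
    (f I : S → ℝ≥0∞) (hsub : I ≤ Phi φ μ f I)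
    (hfin : ∀ n : ℕ, FinExp ((Phi φ μ f)^[n] I)) (s : S) (n : ℕ) :
    Measurable[Gn n] (Xn φ f I n) ∧
    (∫⁻ ϑ, Xn φ f I n ϑ ∂(P s)) < ⊤ ∧
    ∀ G : Set (ℕ → S), MeasurableSet[Gn n] G →
      ∫⁻ ϑ in G, Xn φ f I n ϑ ∂(P s) ≤ ∫⁻ ϑ in G, Xn φ f I (n + 1) ϑ ∂(P s) :=
  subinvariant_submartingale_general φ μ P hPC f I hsub hfin s n
end
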